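/- arXiv:1609.01046 — 3 statements merged into one kernel-verified Lean document; each statement's English description precedes it below -/
import Mathlib

section
/- Let n, k, l be positive integers, α, μ > 0 and ρ ∈ ℝ. Let M̃ be a symmetric positive definite real n×n matrix, M a symmetric positive definite real k×k matrix, B, R real n×k matrices, and C₁, C₂ real l×n matrices. Set S := -(1/2) B M⁻¹ Rᵀ + (1/2) R M⁻¹ Bᵀ and A := α M̃ + μ B M⁻¹ Bᵀ + ρ S. Suppose u₁, u₂ ∈ ℝⁿ, p ∈ ℝˡ and F₁, F₂ ∈ ℝⁿ satisfy A u₁ + C₁ᵀ p = F₁, A u₂ + C₂ᵀ p = F₂, and C₁ u₁ + C₂ u₂ = 0. Then α (u₁ᵀ M̃ u₁ + u₂ᵀ M̃ u₂) + μ (u₁ᵀ B M⁻¹ Bᵀ u₁ + u₂ᵀ B M⁻¹ Bᵀ u₂) = F₁ᵀ u₁ + F₂ᵀ u₂. -/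
/-!
Testing the momentum equations against `u₁` and `u₂` turns the pressure terms into
`p ⬝ᵥ (C₁ u₁ + C₂ u₂)`, which vanishes by incompressibility. Since `M⁻¹` is symmetric,
`S` is skew-symmetric, so its quadratic form is zero and the convection term drops out of the
energy.
-/

open Matrix

namespace Matrix

variable {m n R : Type*} [Fintype m]

theorem transpose_mul_mul_transpose_of_isSymm [CommSemiring R] {N : Matrix m m R}
    (hN : N.IsSymm) (B C : Matrix n m R) : (B * N * Cᵀ)ᵀ = C * N * Bᵀ := by
  rw [transpose_mul, transpose_mul, transpose_transpose, hN.eq, Matrix.mul_assoc]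

theorem dotProduct_mulVec_self_eq_zero_of_transpose_eq_neg [Fintype n] [CommRing R]
    [NoZeroDivisors R] [CharZero R] {S : Matrix n n R} (hS : Sᵀ = -S) (u : n → R) :
    u ⬝ᵥ (S *ᵥ u) = 0 := by
  have h : u ⬝ᵥ (S *ᵥ u) = u ⬝ᵥ (Sᵀ *ᵥ u) := (dotProduct_transpose_mulVec S u u).symm
  rw [hS, neg_mulVec, dotProduct_neg] at h
  exact CharZero.eq_neg_self_iff.mp h

theorem dotProduct_eq_of_mulVec_add_transpose_mulVec_eq [Fintype n] [CommSemiring R]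
    {A : Matrix n n R} {C : Matrix m n R} {u F : n → R} {p : m → R} (h : A *ᵥ u + Cᵀ *ᵥ p = F) :
    F ⬝ᵥ u = u ⬝ᵥ (A *ᵥ u) + p ⬝ᵥ (C *ᵥ u) := by
  rw [← h, add_dotProduct, dotProduct_comm (A *ᵥ u), dotProduct_comm (Cᵀ *ᵥ p),
    dotProduct_transpose_mulVec]

end Matrix

theorem discrete_energy_identity_general
    (n k l : ℕ)
    (α μ ρ : ℝ)
    (Mt : Matrix (Fin n) (Fin n) ℝ) (M : Matrix (Fin k) (Fin k) ℝ)
    (hM : M.PosDef)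
    (B R : Matrix (Fin n) (Fin k) ℝ)
    (C₁ C₂ : Matrix (Fin l) (Fin n) ℝ)
    (S A : Matrix (Fin n) (Fin n) ℝ)
    (hS : S = -(1/2 : ℝ) • (B * M⁻¹ * Rᵀ) + (1/2 : ℝ) • (R * M⁻¹ * Bᵀ))
    (hA : A = α • Mt + μ • (B * M⁻¹ * Bᵀ) + ρ • S)
    (u₁ u₂ F₁ F₂ : Fin n → ℝ) (p : Fin l → ℝ)
    (h1 : A *ᵥ u₁ + C₁ᵀ *ᵥ p = F₁)
    (h2 : A *ᵥ u₂ + C₂ᵀ *ᵥ p = F₂)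
    (h3 : C₁ *ᵥ u₁ + C₂ *ᵥ u₂ = 0) :
    α * (u₁ ⬝ᵥ (Mt *ᵥ u₁) + u₂ ⬝ᵥ (Mt *ᵥ u₂))
        + μ * (u₁ ⬝ᵥ ((B * M⁻¹ * Bᵀ) *ᵥ u₁) + u₂ ⬝ᵥ ((B * M⁻¹ * Bᵀ) *ᵥ u₂))
      = F₁ ⬝ᵥ u₁ + F₂ ⬝ᵥ u₂ := by
  have hMinv : M⁻¹.IsSymm := (isHermitian_iff_isSymm.mp hM.isHermitian).inv
  have hS_skew : Sᵀ = -S := by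
    rw [hS, transpose_add, transpose_smul, transpose_smul,
      transpose_mul_mul_transpose_of_isSymm hMinv, transpose_mul_mul_transpose_of_isSymm hMinv]
    simp only [neg_smul, neg_add, neg_neg]
    abel
  have hA_energy : ∀ u, u ⬝ᵥ (A *ᵥ u) =
      α * (u ⬝ᵥ (Mt *ᵥ u)) + μ * (u ⬝ᵥ ((B * M⁻¹ * Bᵀ) *ᵥ u)) := fun u => by
    simp only [hA, add_mulVec, smul_mulVec, dotProduct_add, dotProduct_smul, smul_eq_mul,
      dotProduct_mulVec_self_eq_zero_of_transpose_eq_neg hS_skew, mul_zero, add_zero]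
  have hp : p ⬝ᵥ (C₁ *ᵥ u₁) + p ⬝ᵥ (C₂ *ᵥ u₂) = 0 := by
    rw [← dotProduct_add, h3, dotProduct_zero]
  rw [dotProduct_eq_of_mulVec_add_transpose_mulVec_eq h1,
    dotProduct_eq_of_mulVec_add_transpose_mulVec_eq h2, hA_energy, hA_energy]
  linear_combination -hp

/-- The algebraic energy identity for the reduced saddle-point system:
if `A u₁ + C₁ᵀ p = F₁`, `A u₂ + C₂ᵀ p = F₂` and `C₁ u₁ + C₂ u₂ = 0`, then
`α (u₁ᵀ M̃ u₁ + u₂ᵀ M̃ u₂) + μ (u₁ᵀ BM⁻¹Bᵀ u₁ + u₂ᵀ BM⁻¹Bᵀ u₂) = F₁ᵀ u₁ + F₂ᵀ u₂`. -/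
theorem discrete_energy_identity
    (n k l : ℕ) (hn : 0 < n) (hk : 0 < k) (hl : 0 < l)
    (α μ ρ : ℝ) (hα : 0 < α) (hμ : 0 < μ)
    (Mt : Matrix (Fin n) (Fin n) ℝ) (M : Matrix (Fin k) (Fin k) ℝ)
    (hMt : Mt.PosDef) (hM : M.PosDef)
    (B R : Matrix (Fin n) (Fin k) ℝ)
    (C₁ C₂ : Matrix (Fin l) (Fin n) ℝ)
    (S A : Matrix (Fin n) (Fin n) ℝ)
    (hS : S = -(1/2 : ℝ) • (B * M⁻¹ * Rᵀ) + (1/2 : ℝ) • (R * M⁻¹ * Bᵀ))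
    (hA : A = α • Mt + μ • (B * M⁻¹ * Bᵀ) + ρ • S)
    (u₁ u₂ F₁ F₂ : Fin n → ℝ) (p : Fin l → ℝ)
    (h1 : A *ᵥ u₁ + C₁ᵀ *ᵥ p = F₁)
    (h2 : A *ᵥ u₂ + C₂ᵀ *ᵥ p = F₂)
    (h3 : C₁ *ᵥ u₁ + C₂ *ᵥ u₂ = 0) :
    α * (u₁ ⬝ᵥ (Mt *ᵥ u₁) + u₂ ⬝ᵥ (Mt *ᵥ u₂))
        + μ * (u₁ ⬝ᵥ ((B * M⁻¹ * Bᵀ) *ᵥ u₁) + u₂ ⬝ᵥ ((B * M⁻¹ * Bᵀ) *ᵥ u₂))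
      = F₁ ⬝ᵥ u₁ + F₂ ⬝ᵥ u₂ :=
  discrete_energy_identity_general n k l α μ ρ Mt M hM B R C₁ C₂ S A hS hA u₁ u₂ F₁ F₂ p h1 h2 h3
end

section
/- Let O ⊆ ℝ² be an open set, μ > 0, ρ ∈ ℝ, u : O → ℝ a twice continuously differentiable function, and V : O → ℝ² a continuously differentiable vector field with div V = 0 on O. Define w : O → ℝ² by w := √μ ∇u - (ρ/(2√μ)) u V. Then at every point of O, -√μ div w + (ρ/(2√μ)) V·w + (ρ²/(4μ)) u (V·V) = -μ Δu + ρ V·∇u. -/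
open scoped BigOperators

/-- The partial derivative of a scalar function on ℝ² in the `i`-th coordinate
direction. -/
noncomputable def pderiv2 (i : Fin 2) (f : EuclideanSpace ℝ (Fin 2) → ℝ)
    (x : EuclideanSpace ℝ (Fin 2)) : ℝ :=
  fderiv ℝ f x (EuclideanSpace.single i 1)

/-!
Expanding `div w` by the product rule, the term `-√μ div(-(ρ/(2√μ)) u V)` equals
`(ρ/2) (∇u·V + u div V) = (ρ/2) V·∇u`, while `(ρ/(2√μ)) V·w` contributes another
`(ρ/2) V·∇u` together with `-(ρ²/(4μ)) u (V·V)`, which cancels the last term on the left.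
-/

section pderiv2

variable {f g : EuclideanSpace ℝ (Fin 2) → ℝ} {x : EuclideanSpace ℝ (Fin 2)} (i : Fin 2)

theorem pderiv2_sub (hf : DifferentiableAt ℝ f x) (hg : DifferentiableAt ℝ g x) :
    pderiv2 i (fun y => f y - g y) x = pderiv2 i f x - pderiv2 i g x := by
  simp [pderiv2, fderiv_fun_sub hf hg]

theorem pderiv2_const_mul (c : ℝ) (hf : DifferentiableAt ℝ f x) :
    pderiv2 i (fun y => c * f y) x = c * pderiv2 i f x := by
  simp [pderiv2, fderiv_const_mul hf]

theorem pderiv2_mul (hf : DifferentiableAt ℝ f x) (hg : DifferentiableAt ℝ g x) :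
    pderiv2 i (fun y => f y * g y) x = pderiv2 i f x * g x + f x * pderiv2 i g x := by
  simp [pderiv2, fderiv_fun_mul hf hg]
  ring

theorem ContDiffOn.differentiableAt_pderiv2 {O : Set (EuclideanSpace ℝ (Fin 2))}
    (hO : IsOpen O) (hf : ContDiffOn ℝ 2 f O) (hx : x ∈ O) :
    DifferentiableAt ℝ (pderiv2 i f) x := by
  have hf' : ContDiffOn ℝ 1 (fderiv ℝ f) O :=
    ((contDiffOn_succ_iff_fderiv_of_isOpen hO).mp hf).2.2
  exact ((hf'.differentiableOn one_ne_zero).differentiableAt (hO.mem_nhds hx)).clm_apply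
    (differentiableAt_const _)

theorem pderiv2_grad_sub_flux (a b : ℝ) {V : EuclideanSpace ℝ (Fin 2) → ℝ}
    (hf : DifferentiableAt ℝ f x) (hdf : DifferentiableAt ℝ (pderiv2 i f) x)
    (hV : DifferentiableAt ℝ V x) :
    pderiv2 i (fun y => a * pderiv2 i f y - b * (f y * V y)) x
      = a * pderiv2 i (pderiv2 i f) x - b * (pderiv2 i f x * V x + f x * pderiv2 i V x) := by
  rw [pderiv2_sub i (hdf.const_mul a) ((hf.fun_mul hV).const_mul b), pderiv2_const_mul i a hdf,
    pderiv2_const_mul i b (hf.fun_mul hV), pderiv2_mul i hf hV]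

end pderiv2

/-- The splitting identity of the convection-diffusion operator: with
`w = √μ ∇u - (ρ/(2√μ)) u V` and `div V = 0` on an open set `O`, at every point of `O`
one has `-√μ div w + (ρ/(2√μ)) V·w + (ρ²/(4μ)) u (V·V) = -μ Δu + ρ V·∇u`. -/
theorem convection_diffusion_splitting
    (O : Set (EuclideanSpace ℝ (Fin 2))) (hO : IsOpen O)
    (μ ρ : ℝ) (hμ : 0 < μ)
    (u : EuclideanSpace ℝ (Fin 2) → ℝ)
    (V : EuclideanSpace ℝ (Fin 2) → EuclideanSpace ℝ (Fin 2))
    (hu : ContDiffOn ℝ 2 u O) (hV : ContDiffOn ℝ 1 V O)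
    (hdivV : ∀ x ∈ O, ∑ i, pderiv2 i (fun y => V y i) x = 0)
    (w : EuclideanSpace ℝ (Fin 2) → Fin 2 → ℝ)
    (hw : ∀ y i, w y i = Real.sqrt μ * pderiv2 i u y
            - (ρ / (2 * Real.sqrt μ)) * (u y * V y i)) :
    ∀ x ∈ O,
      -Real.sqrt μ * (∑ i, pderiv2 i (fun y => w y i) x)
          + (ρ / (2 * Real.sqrt μ)) * (∑ i, V x i * w x i)
          + (ρ ^ 2 / (4 * μ)) * (u x * ∑ i, V x i * V x i)
        = -μ * (∑ i, pderiv2 i (fun y => pderiv2 i u y) x)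
            + ρ * (∑ i, V x i * pderiv2 i u x) := by
  intro x hx
  have du : DifferentiableAt ℝ u x :=
    (hu.differentiableOn two_ne_zero).differentiableAt (hO.mem_nhds hx)
  have dV : ∀ i, DifferentiableAt ℝ (fun y => V y i) x := (differentiableAt_piLp 2).mp <|
    (hV.differentiableOn one_ne_zero).differentiableAt (hO.mem_nhds hx)
  have hdivw : ∀ i, pderiv2 i (fun y => w y i) x
      = √μ * pderiv2 i (pderiv2 i u) x
        - ρ / (2 * √μ) * (pderiv2 i u x * V x i + u x * pderiv2 i (fun y => V y i) x) := by
    intro i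
    simp only [hw]
    exact pderiv2_grad_sub_flux i _ _ du (hu.differentiableAt_pderiv2 i hO hx) (dV i)
  have hsq : √μ * √μ = μ := Real.mul_self_sqrt hμ.le
  have hsqrt : √μ ≠ 0 := (Real.sqrt_pos.mpr hμ).ne'
  have hcoef : ρ / (2 * √μ) * √μ = ρ / 2 := by field_simp
  have hcoef_sq : ρ / (2 * √μ) * (ρ / (2 * √μ)) = ρ ^ 2 / (4 * μ) := by
    rw [div_mul_div_comm, sq, show 2 * √μ * (2 * √μ) = 4 * μ by linear_combination 4 * hsq]
  have hdiv := hdivV x hx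
  simp only [Fin.sum_univ_two] at hdiv ⊢
  rw [hdivw 0, hdivw 1, hw x 0, hw x 1]
  linear_combination
    (-(pderiv2 0 (pderiv2 0 u) x + pderiv2 1 (pderiv2 1 u) x)) * hsq
    + (2 * (pderiv2 0 u x * V x 0 + pderiv2 1 u x * V x 1)) * hcoef
    + (-(u x) * (V x 0 * V x 0 + V x 1 * V x 1)) * hcoef_sq
    + (√μ * (ρ / (2 * √μ)) * u x) * hdiv
end

section
/- Let U, W, P be finite-dimensional real inner product spaces, α, μ > 0, ρ ∈ ℝ, and β > 0. Let B : W × U → ℝ, R : W × U → ℝ and b : (U × U) × P → ℝ be bilinear maps, let ‖·‖_Z be a norm on U, and assume the inf-sup condition: for every v ∈ U, β ‖v‖_Z ≤ sup_{ψ ∈ W, ψ ≠ 0} B(ψ, v)/‖ψ‖. Suppose u = (u₁, u₂) ∈ U × U, w, z, w̃, z̃ ∈ W, p ∈ P and F ∈ U × U satisfy: (i) α⟨u, v⟩ + √μ B(w, v₁) + √μ B(z, v₂) + (ρ/(2√μ)) R(w + (ρ/(2√μ)) w̃, v₁) + (ρ/(2√μ)) R(z + (ρ/(2√μ)) z̃,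 v₂) + b(v, p) = ⟨F, v⟩ for all v = (v₁, v₂) ∈ U × U; (ii) √μ B(ψ, u₁) - (ρ/(2√μ)) ⟨w̃, ψ⟩ = ⟨w, ψ⟩ for all ψ ∈ W; (iii) √μ B(ψ, u₂) - (ρ/(2√μ)) ⟨z̃, ψ⟩ = ⟨z, ψ⟩ for all ψ ∈ W; (iv) R(ψ, u₁) = ⟨w̃, ψ⟩ for all ψ ∈ W; (v) R(ψ, u₂) = ⟨z̃, ψ⟩ for all ψ ∈ W; (vi) b(u, q) = 0 for all q ∈ P. Then α ⟨u, u⟩ + β² μ (‖u₁‖²_Z + ‖u₂‖²_Z) ≤ ⟨F, u⟩. -/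
open scoped RealInnerProductSpace

/-!
Put `ŵ = w + c • w̃` and `ẑ = z + c • z̃` with `c = ρ / (2√μ)`. Equations (ii)–(v) say that
`√μ B(·, u₁)` and `√μ B(·, u₂)` are represented by `ŵ` and `ẑ`, so testing (i) with `v = u`
(and using (vi) to drop the pressure) gives the energy identity
`α⟨u, u⟩ + ‖ŵ‖² + ‖ẑ‖² = ⟨F, u⟩`. By Cauchy–Schwarz the inf-sup quotient of `uᵢ` is at most
`‖ŵ‖/√μ` resp. `‖ẑ‖/√μ`, hence `β²μ Z(uᵢ)² ≤ ‖ŵ‖²` resp. `‖ẑ‖²`.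
-/

section InfSup

variable {W : Type*} [NormedAddCommGroup W] [InnerProductSpace ℝ W]

theorem iSup_div_norm_le_norm_of_eq_inner (f : W → ℝ) (g : W) (hf : ∀ ψ, f ψ = ⟪g, ψ⟫) :
    ⨆ ψ : {ψ : W // ψ ≠ 0}, f ψ / ‖ψ.1‖ ≤ ‖g‖ :=
  Real.iSup_le (fun ψ => by
      rw [hf, div_le_iff₀ (norm_pos_iff.2 ψ.2)]
      exact real_inner_le_norm g ψ)
    (norm_nonneg g)

theorem sq_mul_le_norm_sq_of_le_iSup_div_norm {f : W → ℝ} {g : W} {t s : ℝ}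
    (ht : 0 ≤ t) (hs : 0 < s) (hf : ∀ ψ, s * f ψ = ⟪g, ψ⟫)
    (hinf : t ≤ ⨆ ψ : {ψ : W // ψ ≠ 0}, f ψ / ‖ψ.1‖) :
    (t * s) ^ 2 ≤ ‖g‖ ^ 2 := by
  have hf' : ∀ ψ, f ψ = ⟪s⁻¹ • g, ψ⟫ := fun ψ => by
    rw [real_inner_smul_left, ← hf, inv_mul_cancel_left₀ hs.ne']
  have hts : t * s ≤ ‖g‖ := by
    have := hinf.trans (iSup_div_norm_le_norm_of_eq_inner f _ hf')
    rwa [norm_smul, Real.norm_of_nonneg (inv_nonneg.2 hs.le), ← div_eq_inv_mul,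
      le_div_iff₀ hs] at this
  exact pow_le_pow_left₀ (mul_nonneg ht hs.le) hts 2

end InfSup

section Energy

variable {U W : Type*} [AddCommGroup U] [Module ℝ U]
  [NormedAddCommGroup W] [InnerProductSpace ℝ W]

theorem mul_apply_add_mul_apply_eq_norm_sq {B R : W →ₗ[ℝ] U →ₗ[ℝ] ℝ} {u : U} {w wt : W}
    {s c : ℝ} (hB : ∀ ψ, s * B ψ u = ⟪w + c • wt, ψ⟫) (hR : ∀ ψ, R ψ u = ⟪wt, ψ⟫) :
    s * B w u + c * R (w + c • wt) u = ‖w + c • wt‖ ^ 2 := by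
  rw [hB, hR, real_inner_comm (w + c • wt) wt, ← real_inner_smul_right, ← inner_add_right,
    real_inner_self_eq_norm_sq]

end Energy

theorem sdg_stability_lemma_general
    {U W P : Type*}
    [NormedAddCommGroup U] [InnerProductSpace ℝ U]
    [NormedAddCommGroup W] [InnerProductSpace ℝ W]
    [NormedAddCommGroup P] [InnerProductSpace ℝ P]
    (α μ ρ β : ℝ) (hμ : 0 < μ) (hβ : 0 < β)
    (B R : W →ₗ[ℝ] U →ₗ[ℝ] ℝ)
    (b : (U × U) →ₗ[ℝ] P →ₗ[ℝ] ℝ)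
    (Z : U → ℝ)
    (hZs : ∀ (a : ℝ) (v : U), Z (a • v) = |a| * Z v)
    (hZt : ∀ v₁ v₂ : U, Z (v₁ + v₂) ≤ Z v₁ + Z v₂)
    (hinf : ∀ v : U, β * Z v ≤ ⨆ ψ : {ψ : W // ψ ≠ 0}, B ψ.1 v / ‖ψ.1‖)
    (u₁ u₂ : U) (w z wt zt : W) (p : P) (F₁ F₂ : U)
    (h1 : ∀ v₁ v₂ : U,
      α * (⟪u₁, v₁⟫ + ⟪u₂, v₂⟫)
          + Real.sqrt μ * B w v₁ + Real.sqrt μ * B z v₂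
          + (ρ / (2 * Real.sqrt μ)) * R (w + (ρ / (2 * Real.sqrt μ)) • wt) v₁
          + (ρ / (2 * Real.sqrt μ)) * R (z + (ρ / (2 * Real.sqrt μ)) • zt) v₂
          + b (v₁, v₂) p
        = ⟪F₁, v₁⟫ + ⟪F₂, v₂⟫)
    (h2 : ∀ ψ : W, Real.sqrt μ * B ψ u₁ - (ρ / (2 * Real.sqrt μ)) * ⟪wt, ψ⟫ = ⟪w, ψ⟫)
    (h3 : ∀ ψ : W, Real.sqrt μ * B ψ u₂ - (ρ / (2 * Real.sqrt μ)) * ⟪zt, ψ⟫ = ⟪z, ψ⟫)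
    (h4 : ∀ ψ : W, R ψ u₁ = ⟪wt, ψ⟫)
    (h5 : ∀ ψ : W, R ψ u₂ = ⟪zt, ψ⟫)
    (h6 : ∀ q : P, b (u₁, u₂) q = 0) :
    α * (⟪u₁, u₁⟫ + ⟪u₂, u₂⟫) + β ^ 2 * μ * (Z u₁ ^ 2 + Z u₂ ^ 2)
      ≤ ⟪F₁, u₁⟫ + ⟪F₂, u₂⟫ := by
  set s := Real.sqrt μ
  set c := ρ / (2 * s)
  have hs : 0 < s := Real.sqrt_pos.2 hμ
  -- `Z ≥ 0` (it is a seminorm) is what allows squaring the inf-sup bound.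
  let N : Seminorm ℝ U := Seminorm.of Z hZt fun a v => by rw [hZs, Real.norm_eq_abs]
  have hB₁ : ∀ ψ, s * B ψ u₁ = ⟪w + c • wt, ψ⟫ := fun ψ => by
    rw [inner_add_left, real_inner_smul_left]; linarith [h2 ψ]
  have hB₂ : ∀ ψ, s * B ψ u₂ = ⟪z + c • zt, ψ⟫ := fun ψ => by
    rw [inner_add_left, real_inner_smul_left]; linarith [h3 ψ]
  have energy : α * (⟪u₁, u₁⟫ + ⟪u₂, u₂⟫) + ‖w + c • wt‖ ^ 2 + ‖z + c • zt‖ ^ 2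
      = ⟪F₁, u₁⟫ + ⟪F₂, u₂⟫ := by
    linarith [h1 u₁ u₂, h6 p, mul_apply_add_mul_apply_eq_norm_sq hB₁ h4,
      mul_apply_add_mul_apply_eq_norm_sq hB₂ h5]
  have bound : ∀ {v g}, (∀ ψ, s * B ψ v = ⟪g, ψ⟫) → β ^ 2 * μ * Z v ^ 2 ≤ ‖g‖ ^ 2 :=
    fun hB => by
      have := sq_mul_le_norm_sq_of_le_iSup_div_norm
        (mul_nonneg hβ.le (apply_nonneg N _)) hs hB (hinf _)
      rwa [mul_pow, mul_pow, Real.sq_sqrt hμ.le, mul_right_comm] at this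
  linarith [bound hB₁, bound hB₂]

/-- Abstract form of Lemma 4.1 (basic stability result) of the SDG-IBM paper:
for the discrete SDG system for the linearized Navier-Stokes equations, the solution
satisfies `α⟨u,u⟩ + β²μ(‖u₁‖_Z² + ‖u₂‖_Z²) ≤ ⟨F,u⟩`. -/
theorem sdg_stability_lemma
    {U W P : Type*}
    [NormedAddCommGroup U] [InnerProductSpace ℝ U] [FiniteDimensional ℝ U]
    [NormedAddCommGroup W] [InnerProductSpace ℝ W] [FiniteDimensional ℝ W]
    [NormedAddCommGroup P] [InnerProductSpace ℝ P] [FiniteDimensional ℝ P]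
    (α μ ρ β : ℝ) (hα : 0 < α) (hμ : 0 < μ) (hβ : 0 < β)
    (B R : W →ₗ[ℝ] U →ₗ[ℝ] ℝ)
    (b : (U × U) →ₗ[ℝ] P →ₗ[ℝ] ℝ)
    (Z : U → ℝ)
    (hZ0 : ∀ v : U, Z v = 0 ↔ v = 0)
    (hZs : ∀ (a : ℝ) (v : U), Z (a • v) = |a| * Z v)
    (hZt : ∀ v₁ v₂ : U, Z (v₁ + v₂) ≤ Z v₁ + Z v₂)
    (hinf : ∀ v : U, β * Z v ≤ ⨆ ψ : {ψ : W // ψ ≠ 0}, B ψ.1 v / ‖ψ.1‖)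
    (u₁ u₂ : U) (w z wt zt : W) (p : P) (F₁ F₂ : U)
    (h1 : ∀ v₁ v₂ : U,
      α * (⟪u₁, v₁⟫ + ⟪u₂, v₂⟫)
          + Real.sqrt μ * B w v₁ + Real.sqrt μ * B z v₂
          + (ρ / (2 * Real.sqrt μ)) * R (w + (ρ / (2 * Real.sqrt μ)) • wt) v₁
          + (ρ / (2 * Real.sqrt μ)) * R (z + (ρ / (2 * Real.sqrt μ)) • zt) v₂
          + b (v₁, v₂) p
        = ⟪F₁, v₁⟫ + ⟪F₂, v₂⟫)
    (h2 : ∀ ψ : W, Real.sqrt μ * B ψ u₁ - (ρ / (2 * Real.sqrt μ)) * ⟪wt, ψ⟫ = ⟪w, ψ⟫)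
    (h3 : ∀ ψ : W, Real.sqrt μ * B ψ u₂ - (ρ / (2 * Real.sqrt μ)) * ⟪zt, ψ⟫ = ⟪z, ψ⟫)
    (h4 : ∀ ψ : W, R ψ u₁ = ⟪wt, ψ⟫)
    (h5 : ∀ ψ : W, R ψ u₂ = ⟪zt, ψ⟫)
    (h6 : ∀ q : P, b (u₁, u₂) q = 0) :
    α * (⟪u₁, u₁⟫ + ⟪u₂, u₂⟫) + β ^ 2 * μ * (Z u₁ ^ 2 + Z u₂ ^ 2)
      ≤ ⟪F₁, u₁⟫ + ⟪F₂, u₂⟫ :=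
  sdg_stability_lemma_general α μ ρ β hμ hβ B R b Z hZs hZt hinf u₁ u₂ w z wt zt p F₁ F₂ h1 h2 h3 h4
    h5 h6
end
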